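/- arXiv:2011.05169 — 2 statements merged into one kernel-verified Lean document; each statement's English description precedes it below -/
import Mathlib

section
/- For any connected multigraph G = (V,E), the set Ncond(G) is nonempty if and only if G is not a bipartite graph (i.e., it is not the case that G has no self-loops and its node set can be partitioned into two parts with every edge joining the two parts). -/
open scoped BigOperators

attribute [local instance] Classical.propDecidable

/-- A multigraph on the vertex set `V`: a symmetric binary relation on `V`,
possibly with self-loops. -/
structure Multigraph (V : Type*) where
  Adj : V → V → Prop
  symm : ∀ u v, Adj u v → Adj v u

namespace Multigraph

variable {V : Type*}

/-- The neighborhood `E(U)` of a set `U` of vertices. -/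
def nbhd (G : Multigraph V) (U : Set V) : Set V :=
  {v | ∃ u ∈ U, G.Adj u v}

/-- `V₁`, the set of self-looped vertices. -/
def loopSet (G : Multigraph V) : Set V := {v | G.Adj v v}

/-- `V₂`, the set of non-self-looped vertices. -/
def nonloopSet (G : Multigraph V) : Set V := {v | ¬ G.Adj v v}

/-- The maximal subgraph `Ǧ`, obtained by deleting all self-loops. -/
def check (G : Multigraph V) : Multigraph V where
  Adj u v := G.Adj u v ∧ u ≠ v
  symm u v h := ⟨G.symm u v h.1, h.2.symm⟩

/-- An independent set: a nonempty set of pairwise non-adjacent vertices. -/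
def IsIndep (G : Multigraph V) (I : Set V) : Prop :=
  I.Nonempty ∧ ∀ i ∈ I, ∀ j ∈ I, ¬ G.Adj i j

/-- Connectivity of a multigraph: any two nodes are joined by a path of edges. -/
def Connected (G : Multigraph V) : Prop :=
  ∀ u v : V, Relation.ReflTransGen G.Adj u v

/-- `G` is a bipartite graph: its vertex set splits into two parts such that every
edge joins the two parts (in particular, `G` has no self-loop). -/
def IsBipartiteGraph (G : Multigraph V) : Prop :=
  ∃ A B : Set V, (∀ v, v ∈ A ∨ v ∈ B) ∧ (∀ v, ¬(v ∈ A ∧ v ∈ B)) ∧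
    ∀ u v, G.Adj u v → (u ∈ A ∧ v ∈ B) ∨ (u ∈ B ∧ v ∈ A)

section Meas

variable [Fintype V]

/-- Total mass `μ(S)` of a set of vertices. -/
noncomputable def mass (μ : V → ℝ) (S : Set V) : ℝ := ∑ v, S.indicator μ v

/-- `μ ∈ ℳ(V)`: a probability measure with full support on `V`. -/
def FullSupport (μ : V → ℝ) : Prop := (∀ v, 0 < μ v) ∧ ∑ v, μ v = 1

/-- The stability condition `Ncond(G)`: fully supported probability measures `μ` such
that `μ(I) < μ(E(I))` for every independent set `I` of `G`. -/
def Ncond (G : Multigraph V) (μ : V → ℝ) : Prop :=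
  FullSupport μ ∧ ∀ I : Set V, G.IsIndep I → mass μ I < mass μ (G.nbhd I)

/-- The degree of a vertex: its number of neighbors (including itself if self-looped). -/
noncomputable def deg (G : Multigraph V) (i : V) : ℕ := (G.nbhd {i}).ncard

end Meas
end Multigraph


/-!
If `μ ∈ Ncond(G)` and `A ⊔ B` is a bipartition, each part `A` is independent with `E(A) ⊆ B`,
so `μ(A) < μ(B)` when `A` is nonempty and `μ(A) = 0 ≤ μ(B)` otherwise. Since some part is
nonempty, this cannot hold in both directions.

Conversely, take `μ` proportional to the degree. For an independent set `I` every edge at `I`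
ends in `E(I)`, so double counting gives `∑_{I} deg ≤ ∑_{E(I)} deg`. Equality would force all
neighbours of `E(I)` back into `I`; by connectivity `I ⊔ E(I)` would then be a bipartition.
-/

open Finset

namespace Multigraph

variable {V : Type*}

theorem adj_comm (G : Multigraph V) {u v : V} : G.Adj u v ↔ G.Adj v u :=
  ⟨G.symm u v, G.symm v u⟩

section Bipartition

variable {G : Multigraph V} {I : Set V}

theorem isBipartiteGraph_of_nbhd_adj_mem (hconn : G.Connected) (hI : G.IsIndep I)
    (hclosed : ∀ v ∈ G.nbhd I, ∀ u, G.Adj v u → u ∈ I) : G.IsBipartiteGraph := by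
  obtain ⟨⟨i₀, hi₀⟩, hindep⟩ := hI
  have hcover : ∀ w, w ∈ I ∨ w ∈ G.nbhd I := by
    intro w
    induction hconn i₀ w with
    | refl => exact Or.inl hi₀
    | tail _ hadj ih =>
      exact ih.elim (fun h => Or.inr ⟨_, h, hadj⟩) fun h => Or.inl (hclosed _ h _ hadj)
  refine ⟨I, G.nbhd I, hcover, fun w ⟨hwI, u, huI, hadj⟩ => hindep u huI w hwI hadj, ?_⟩
  intro a b hadj
  rcases hcover a with ha | ha
  · exact Or.inl ⟨ha, a, ha, hadj⟩
  · exact Or.inr ⟨ha, hclosed a ha b hadj⟩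

theorem exists_adj_not_mem_of_not_isBipartiteGraph (hconn : G.Connected)
    (hnb : ¬ G.IsBipartiteGraph) (hI : G.IsIndep I) :
    ∃ v ∈ G.nbhd I, ∃ u, G.Adj v u ∧ u ∉ I := by
  by_contra! hclosed
  exact hnb (isBipartiteGraph_of_nbhd_adj_mem hconn hI hclosed)

theorem nbhd_singleton_nonempty (hconn : G.Connected) (hnb : ¬ G.IsBipartiteGraph) (v : V) :
    (G.nbhd {v}).Nonempty := by
  by_cases hloop : G.Adj v v
  · exact ⟨v, v, rfl, hloop⟩
  · have hindep : G.IsIndep {v} := ⟨⟨v, rfl⟩, by rintro _ rfl _ rfl; exact hloop⟩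
    obtain ⟨w, hw, -⟩ := exists_adj_not_mem_of_not_isBipartiteGraph hconn hnb hindep
    exact ⟨w, hw⟩

end Bipartition

section Mass

variable [Fintype V]

theorem mass_eq_sum_toFinset (μ : V → ℝ) (S : Set V) : mass μ S = ∑ v ∈ S.toFinset, μ v := by
  simp [mass, Set.indicator_apply, ← Set.filter_mem_univ_eq_toFinset, Finset.sum_filter]

theorem mass_nonneg {μ : V → ℝ} (hμ : ∀ v, 0 ≤ μ v) (S : Set V) : 0 ≤ mass μ S :=
  sum_nonneg fun v _ => Set.indicator_nonneg (fun v _ => hμ v) v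

theorem mass_mono {μ : V → ℝ} (hμ : ∀ v, 0 ≤ μ v) {S T : Set V} (hST : S ⊆ T) :
    mass μ S ≤ mass μ T :=
  sum_le_sum fun v _ => Set.indicator_le_indicator_of_subset hST hμ v

theorem mass_div_const (μ : V → ℝ) (c : ℝ) (S : Set V) :
    mass (fun v => μ v / c) S = mass μ S / c := by
  simp only [mass_eq_sum_toFinset, sum_div]

variable {G : Multigraph V} {μ : V → ℝ} {A B : Set V}

theorem Ncond.mass_lt_of_bipartition (hμ : Ncond G μ) (hdisj : ∀ v, ¬(v ∈ A ∧ v ∈ B))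
    (hAB : ∀ u v, G.Adj u v → u ∈ A → v ∈ B) (hA : A.Nonempty) : mass μ A < mass μ B := by
  have hindep : G.IsIndep A := ⟨hA, fun i hi j hj hadj => hdisj j ⟨hj, hAB i j hadj hi⟩⟩
  have hnbhd : G.nbhd A ⊆ B := fun v ⟨u, hu, hadj⟩ => hAB u v hadj hu
  exact (hμ.2 A hindep).trans_le (mass_mono (fun v => (hμ.1.1 v).le) hnbhd)

theorem Ncond.mass_le_of_bipartition (hμ : Ncond G μ) (hdisj : ∀ v, ¬(v ∈ A ∧ v ∈ B))
    (hAB : ∀ u v, G.Adj u v → u ∈ A → v ∈ B) : mass μ A ≤ mass μ B := by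
  rcases A.eq_empty_or_nonempty with rfl | hA
  · simpa [mass] using mass_nonneg (fun v => (hμ.1.1 v).le) B
  · exact (hμ.mass_lt_of_bipartition hdisj hAB hA).le

theorem Ncond.not_isBipartiteGraph (hμ : Ncond G μ) : ¬ G.IsBipartiteGraph := by
  rintro ⟨A, B, hcover, hdisj, hedge⟩
  have hAB : ∀ u v, G.Adj u v → u ∈ A → v ∈ B := fun u v hadj hu =>
    (hedge u v hadj).elim (·.2) fun h => absurd ⟨hu, h.1⟩ (hdisj u)
  have hBA : ∀ u v, G.Adj u v → u ∈ B → v ∈ A := fun u v hadj hu =>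
    (hedge u v hadj).elim (fun h => absurd ⟨h.1, hu⟩ (hdisj u)) (·.2)
  have hdisj' : ∀ v, ¬(v ∈ B ∧ v ∈ A) := fun v h => hdisj v h.symm
  obtain ⟨v₀⟩ : Nonempty V := by
    by_contra! hV
    simpa using hμ.1.2
  rcases hcover v₀ with hv₀ | hv₀
  · exact (hμ.mass_lt_of_bipartition hdisj hAB ⟨v₀, hv₀⟩).not_ge
      (hμ.mass_le_of_bipartition hdisj' hBA)
  · exact (hμ.mass_lt_of_bipartition hdisj' hBA ⟨v₀, hv₀⟩).not_ge
      (hμ.mass_le_of_bipartition hdisj hAB)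

end Mass

section Degree

variable [Fintype V] {G : Multigraph V}

theorem deg_eq_card_filter (v : V) : G.deg v = #{u | G.Adj v u} := by
  have hnbhd : G.nbhd {v} = ↑({u | G.Adj v u} : Finset V) := by
    ext u
    simp [nbhd]
  rw [deg, hnbhd, Set.ncard_coe_finset]

theorem deg_pos (hconn : G.Connected) (hnb : ¬ G.IsBipartiteGraph) (v : V) : 0 < G.deg v :=
  (Set.ncard_pos (Set.toFinite _)).2 (nbhd_singleton_nonempty hconn hnb v)

theorem card_bipartiteBelow_le_deg (s : Finset V) (v : V) :
    #(s.bipartiteBelow G.Adj v) ≤ G.deg v := by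
  rw [deg_eq_card_filter]
  exact card_le_card fun i hi => by simpa [G.adj_comm] using (mem_bipartiteBelow _).1 hi |>.2

theorem card_bipartiteBelow_lt_deg {s : Finset V} {v u : V} (hadj : G.Adj v u) (hu : u ∉ s) :
    #(s.bipartiteBelow G.Adj v) < G.deg v := by
  rw [deg_eq_card_filter]
  refine card_lt_card ⟨fun i hi => ?_, fun hsub => hu ?_⟩
  · simpa [G.adj_comm] using (mem_bipartiteBelow _).1 hi |>.2
  · exact ((mem_bipartiteBelow _).1 (hsub (by simpa using hadj))).1

theorem sum_deg_lt_sum_deg_nbhd (hconn : G.Connected) (hnb : ¬ G.IsBipartiteGraph)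
    {I : Set V} (hI : G.IsIndep I) :
    ∑ i ∈ I.toFinset, G.deg i < ∑ v ∈ (G.nbhd I).toFinset, G.deg v := by
  obtain ⟨v₀, hv₀, u₀, hadj, hu₀⟩ := exists_adj_not_mem_of_not_isBipartiteGraph hconn hnb hI
  calc ∑ i ∈ I.toFinset, G.deg i
      = ∑ i ∈ I.toFinset, #((G.nbhd I).toFinset.bipartiteAbove G.Adj i) := by
        refine sum_congr rfl fun i hi => ?_
        rw [deg_eq_card_filter]
        congr 1
        ext v
        simp only [mem_bipartiteAbove, mem_filter, mem_univ, true_and, Set.mem_toFinset]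
        exact (and_iff_right_of_imp fun h => ⟨i, Set.mem_toFinset.1 hi, h⟩).symm
    _ = ∑ v ∈ (G.nbhd I).toFinset, #(I.toFinset.bipartiteBelow G.Adj v) :=
        sum_card_bipartiteAbove_eq_sum_card_bipartiteBelow _
    _ < ∑ v ∈ (G.nbhd I).toFinset, G.deg v :=
        sum_lt_sum (fun v _ => card_bipartiteBelow_le_deg _ v)
          ⟨v₀, Set.mem_toFinset.2 hv₀, card_bipartiteBelow_lt_deg hadj (by simpa using hu₀)⟩

noncomputable def degreeMeasure (G : Multigraph V) (v : V) : ℝ :=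
  G.deg v / ∑ w, (G.deg w : ℝ)

theorem ncond_degreeMeasure (hconn : G.Connected) (hnb : ¬ G.IsBipartiteGraph) :
    Ncond G G.degreeMeasure := by
  have hdeg : ∀ v, (0 : ℝ) < G.deg v := fun v => Nat.cast_pos.2 (deg_pos hconn hnb v)
  have : Nonempty V := by
    by_contra! hV
    exact hnb ⟨∅, ∅, fun v => isEmptyElim v, fun v => isEmptyElim v, fun u => isEmptyElim u⟩
  have htotal : 0 < ∑ w, (G.deg w : ℝ) := sum_pos (fun v _ => hdeg v) univ_nonempty
  unfold degreeMeasure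
  refine ⟨⟨fun v => div_pos (hdeg v) htotal, by rw [← sum_div, div_self htotal.ne']⟩, ?_⟩
  intro I hI
  rw [mass_div_const, mass_div_const, div_lt_div_iff_of_pos_right htotal,
    mass_eq_sum_toFinset, mass_eq_sum_toFinset]
  exact_mod_cast sum_deg_lt_sum_deg_nbhd hconn hnb hI

end Degree

end Multigraph

open Multigraph

/-- For any connected multigraph `G`, `Ncond(G)` is nonempty if and
only if `G` is not a bipartite graph. -/
theorem ncond_nonempty_iff_not_bipartite {V : Type*} [Fintype V] (G : Multigraph V)
    (hconn : G.Connected) :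
    (∃ μ : V → ℝ, Ncond G μ) ↔ ¬ G.IsBipartiteGraph :=
  ⟨fun ⟨_, hμ⟩ => hμ.not_isBipartiteGraph, fun hnb => ⟨_, ncond_degreeMeasure hconn hnb⟩⟩
end

section
/- Let G=(V,E) be a connected multigraph with at least two nodes in which every node has a self-loop (V=V₁). Then for every admissible matching policy Φ and every μ∈ℳ(V), the Markov chain (W_n) on 𝕎 is positive recurrent. In particular, the state space 𝕎 is finite: every word in 𝕎 has length at most the cardinality of the largest independent set of the maximal subgraph Ǧ. -/
open scoped BigOperators

attribute [local instance] Classical.propDecidable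

namespace Multigraph

variable {V : Type*}

section Chain

variable [DecidableEq V]

/-- The state space `𝕎` of admissible queue details. -/
def WSpace (G : Multigraph V) : Set (List V) :=
  {w | (∀ i j : V, i ≠ j → G.Adj i j → w.count i = 0 ∨ w.count j = 0) ∧
    ∀ i : V, G.Adj i i → w.count i ≤ 1}

/-- An admissible matching policy: a (possibly random) transition rule which, in state
`w` upon the arrival of an item of class `v`, appends `v` when no compatible item is in
line, and otherwise deletes one stored item of a class compatible with `v`. -/
structure Policy (G : Multigraph V) where
  next : List V → V → List V → ℝ
  nonneg : ∀ w v w', 0 ≤ next w v w'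
  total : ∀ w ∈ WSpace G, ∀ v : V, (∑' w' : List V, next w v w') = 1
  noMatch : ∀ w ∈ WSpace G, ∀ v : V, (∀ a ∈ w, ¬ G.Adj a v) → next w v (w ++ [v]) = 1
  matchRule : ∀ w ∈ WSpace G, ∀ v : V, (∃ a ∈ w, G.Adj a v) → ∀ w' : List V,
    next w v w' ≠ 0 → ∃ k : Fin w.length, G.Adj (w.get k) v ∧ w' = w.eraseIdx k

/-- The transition kernel of the buffer-content Markov chain of the model `(G,Φ,μ)`. -/
noncomputable def kernel [Fintype V] (G : Multigraph V) (pol : Policy G) (μ : V → ℝ)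
    (w w' : List V) : ℝ :=
  ∑ v : V, μ v * pol.next w v w'

/-- Irreducibility (on the state space `𝕎`) of a transition kernel. -/
def Irreducible (G : Multigraph V) (P : List V → List V → ℝ) : Prop :=
  ∀ w ∈ WSpace G, ∀ w' ∈ WSpace G, Relation.ReflTransGen (fun a b => 0 < P a b) w w'

/-- A stationary probability distribution, supported on `𝕎`, for a transition kernel. -/
def IsStationary (G : Multigraph V) (P : List V → List V → ℝ) (π : List V → ℝ) :
    Prop :=
  (∀ w, 0 ≤ π w) ∧ (∀ w ∉ WSpace G, π w = 0) ∧ (∑' w : List V, π w) = 1 ∧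
    ∀ w' : List V, (∑' w : List V, π w * P w w') = π w'

/-- Positive recurrence of the chain: irreducibility together with the existence of a
stationary probability distribution. -/
def PositiveRecurrent (G : Multigraph V) (P : List V → List V → ℝ) : Prop :=
  Irreducible G P ∧ ∃ π : List V → ℝ, IsStationary G P π

end Chain
end Multigraph

/-! With a self-loop at every node, a word of `𝕎` has distinct letters that form an
independent set of `Ǧ`, so `𝕎` is finite. Any state is emptied letter by letter, since an
arrival of the class of a stored item is always matched, and the empty word grows into any
state through arrivals that match nothing; hence the chain is irreducible on `𝕎`. A stochastic
matrix on a finite set has a stationary distribution, which gives positive recurrence. -/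

open Matrix Finset in
theorem Matrix.exists_mem_stdSimplex_vecMul_eq_self {n : Type*} [Fintype n] [DecidableEq n]
    [Nonempty n] {M : Matrix n n ℝ} (hM : M ∈ rowStochastic ℝ n) :
    ∃ x ∈ stdSimplex ℝ n, x ᵥ* M = x := by
  have hdet : (M - 1).det = 0 := exists_mulVec_eq_zero_iff.mp
    ⟨1, one_ne_zero, by rw [sub_mulVec, hM.2, one_mulVec, sub_self]⟩
  obtain ⟨x, hx0, hx⟩ := exists_vecMul_eq_zero_iff.mpr hdet
  rw [vecMul_sub, vecMul_one, sub_eq_zero] at hx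
  set y : n → ℝ := fun i => |x i|
  -- `|x|` is subinvariant and `M` preserves total mass, so `|x|` is invariant.
  have hle : ∀ j, y j ≤ (y ᵥ* M) j := fun j =>
    calc |x j| = |∑ i, x i * M i j| := by rw [← congrFun hx j]; rfl
      _ ≤ ∑ i, |x i * M i j| := abs_sum_le_sum_abs _ _
      _ = (y ᵥ* M) j := sum_congr rfl fun i _ => by
          rw [abs_mul, abs_of_nonneg (hM.1 i j)]
  have hmass : ∑ j, y j = ∑ j, (y ᵥ* M) j := by
    simpa only [hM.2, dotProduct_one] using dotProduct_mulVec y M 1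
  have hy : y ᵥ* M = y := funext fun j =>
    ((sum_eq_sum_iff_of_le fun j _ => hle j).mp hmass j (mem_univ j)).symm
  have hc : 0 < ∑ j, y j := by
    obtain ⟨j, hj⟩ := Function.ne_iff.mp hx0
    exact sum_pos' (fun i _ => abs_nonneg _) ⟨j, mem_univ j, abs_pos.mpr hj⟩
  refine ⟨(∑ j, y j)⁻¹ • y, ⟨fun i => smul_nonneg (inv_nonneg.mpr hc.le) (abs_nonneg _), ?_⟩,
    by rw [smul_vecMul, hy]⟩
  simp only [Pi.smul_apply, smul_eq_mul, ← mul_sum, inv_mul_cancel₀ hc.ne']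

namespace Multigraph

variable {V : Type*} {G : Multigraph V}

theorem isIndep_check_singleton (v : V) : (check G).IsIndep {v} :=
  ⟨Set.singleton_nonempty v, by rintro i rfl j rfl ⟨-, h⟩; exact h rfl⟩

variable [DecidableEq V]

theorem nil_mem_WSpace : [] ∈ WSpace G :=
  ⟨fun _ _ _ _ => Or.inl List.count_nil, fun _ _ => by simp⟩

theorem mem_WSpace_of_sublist {u w : List V} (h : u.Sublist w) (hw : w ∈ WSpace G) :
    u ∈ WSpace G := by
  refine ⟨fun i j hij hadj => ?_, fun i hi => (h.count_le i).trans (hw.2 i hi)⟩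
  rcases hw.1 i j hij hadj with h0 | h0
  · exact Or.inl (Nat.le_zero.mp (h0 ▸ h.count_le i))
  · exact Or.inr (Nat.le_zero.mp (h0 ▸ h.count_le j))

theorem isIndep_check_of_mem_WSpace {w : List V} (hw : w ∈ WSpace G) (hne : w ≠ []) :
    (check G).IsIndep {a | a ∈ w} := by
  refine ⟨List.exists_mem_of_ne_nil w hne, fun i hi j hj ⟨hadj, hij⟩ => ?_⟩
  rcases hw.1 i j hij hadj with h | h
  · exact List.count_eq_zero.mp h hi
  · exact List.count_eq_zero.mp h hj

theorem mem_WSpace_iff_pairwise (hloops : ∀ v, G.Adj v v) {w : List V} :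
    w ∈ WSpace G ↔ w.Pairwise fun a b => ¬ G.Adj a b := by
  have : Std.Symm fun a b => ¬ G.Adj a b := ⟨fun a b h h' => h (G.symm b a h')⟩
  constructor
  · rintro ⟨hedge, hloop⟩
    refine (List.nodup_iff_count_le_one.mpr fun a => hloop a (hloops a)).pairwise_of_forall_ne
      fun a ha b hb hab hadj => ?_
    rcases hedge a b hab hadj with h | h
    · exact List.count_eq_zero.mp h ha
    · exact List.count_eq_zero.mp h hb
  · intro hw
    refine ⟨fun i j hij hadj => ?_, fun i _ => List.nodup_iff_count_le_one.mp (hw.imp ?_) i⟩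
    · by_contra! h
      exact hw.forall (List.count_pos_iff.mp (Nat.pos_of_ne_zero h.1))
        (List.count_pos_iff.mp (Nat.pos_of_ne_zero h.2)) hij hadj
    · rintro a b hab rfl
      exact hab (hloops a)

theorem nodup_of_mem_WSpace (hloops : ∀ v, G.Adj v v) {w : List V} (hw : w ∈ WSpace G) :
    w.Nodup :=
  ((mem_WSpace_iff_pairwise hloops).mp hw).imp fun hab h => by subst h; exact hab (hloops _)

theorem append_mem_WSpace_iff (hloops : ∀ v, G.Adj v v) {w : List V} {v : V} :
    w ++ [v] ∈ WSpace G ↔ w ∈ WSpace G ∧ ∀ a ∈ w, ¬ G.Adj a v := by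
  simp [mem_WSpace_iff_pairwise hloops, List.pairwise_append]

theorem finite_WSpace [Fintype V] (hloops : ∀ v, G.Adj v v) : (WSpace G).Finite :=
  (List.finite_length_le V (Fintype.card V)).subset fun _ hw =>
    (nodup_of_mem_WSpace hloops hw).length_le_card

theorem exists_isIndep_check_length_le [Nonempty V] (hloops : ∀ v, G.Adj v v) {w : List V}
    (hw : w ∈ WSpace G) : ∃ I : Set V, (check G).IsIndep I ∧ w.length ≤ I.ncard := by
  rcases eq_or_ne w [] with rfl | hne
  · exact ⟨{Classical.arbitrary V}, isIndep_check_singleton _, by simp⟩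
  · refine ⟨{a | a ∈ w}, isIndep_check_of_mem_WSpace hw hne, ?_⟩
    have hset : {a | a ∈ w} = (w.toFinset : Set V) := by ext; simp
    rw [hset, Set.ncard_coe_finset,
      List.toFinset_card_of_nodup (nodup_of_mem_WSpace hloops hw)]

namespace Policy

theorem summable_next (pol : Policy G) {w : List V} (hw : w ∈ WSpace G) (v : V) :
    Summable (pol.next w v) := by
  by_contra h
  simpa [tsum_eq_zero_of_not_summable h] using pol.total w hw v

theorem exists_next_pos (pol : Policy G) {w : List V} (hw : w ∈ WSpace G) (v : V) :
    ∃ w', 0 < pol.next w v w' := by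
  by_contra! h
  have : pol.next w v = 0 := funext fun w' => (h w').antisymm (pol.nonneg w v w')
  simpa [this] using pol.total w hw v

theorem next_eq_zero_of_not_mem (hloops : ∀ v, G.Adj v v) (pol : Policy G) {w : List V}
    (hw : w ∈ WSpace G) (v : V) {w' : List V} (hw' : w' ∉ WSpace G) : pol.next w v w' = 0 := by
  by_cases hm : ∃ a ∈ w, G.Adj a v
  · by_contra h
    obtain ⟨k, -, rfl⟩ := pol.matchRule w hw v hm w' h
    exact hw' (mem_WSpace_of_sublist (w.eraseIdx_sublist k) hw)
  · push Not at hm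
    -- the whole unit mass of `pol.next w v` sits at `w ++ [v]`, which lies in `𝕎`
    have hne : w ++ [v] ≠ w' := fun h =>
      hw' (h ▸ (append_mem_WSpace_iff hloops).mpr ⟨hw, hm⟩)
    have := Summable.sum_le_tsum {w ++ [v], w'} (fun b _ => pol.nonneg w v b)
      (pol.summable_next hw v)
    rw [Finset.sum_pair hne, pol.total w hw v, pol.noMatch w hw v hm] at this
    linarith [pol.nonneg w v w']

end Policy

section Kernel

variable [Fintype V]

theorem kernel_nonneg (pol : Policy G) {μ : V → ℝ} (hμ : ∀ v, 0 ≤ μ v) (w w' : List V) :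
    0 ≤ kernel G pol μ w w' :=
  Finset.sum_nonneg fun v _ => mul_nonneg (hμ v) (pol.nonneg w v w')

theorem kernel_pos_of_next_pos (pol : Policy G) {μ : V → ℝ} (hμ : ∀ v, 0 < μ v)
    {w w' : List V} {v : V} (h : 0 < pol.next w v w') : 0 < kernel G pol μ w w' :=
  Finset.sum_pos' (fun i _ => mul_nonneg (hμ i).le (pol.nonneg w i w'))
    ⟨v, Finset.mem_univ v, mul_pos (hμ v) h⟩

theorem kernel_eq_zero_of_not_mem (hloops : ∀ v, G.Adj v v) (pol : Policy G) (μ : V → ℝ)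
    {w w' : List V} (hw : w ∈ WSpace G) (hw' : w' ∉ WSpace G) : kernel G pol μ w w' = 0 :=
  Finset.sum_eq_zero fun v _ => by rw [pol.next_eq_zero_of_not_mem hloops hw v hw', mul_zero]

theorem tsum_kernel (pol : Policy G) (μ : V → ℝ) {w : List V} (hw : w ∈ WSpace G) :
    ∑' w', kernel G pol μ w w' = ∑ v, μ v := by
  unfold kernel
  rw [Summable.tsum_finsetSum fun v _ => (pol.summable_next hw v).mul_left (μ v)]
  simp only [tsum_mul_left, pol.total w hw, mul_one]

theorem reflTransGen_kernel_nil (hloops : ∀ v, G.Adj v v) (pol : Policy G) {μ : V → ℝ}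
    (hμ : ∀ v, 0 < μ v) {w : List V} (hw : w ∈ WSpace G) :
    Relation.ReflTransGen (fun a b => 0 < kernel G pol μ a b) w [] := by
  match w, hw with
  | [], _ => exact .refl
  | a :: t, hw =>
    obtain ⟨w', hpos⟩ := pol.exists_next_pos hw a
    obtain ⟨k, -, rfl⟩ := pol.matchRule _ hw a ⟨a, List.mem_cons_self, hloops a⟩ _ hpos.ne'
    exact .head (kernel_pos_of_next_pos pol hμ hpos) (reflTransGen_kernel_nil hloops pol hμ
      (mem_WSpace_of_sublist (List.eraseIdx_sublist _ _) hw))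
termination_by w.length
decreasing_by simp [List.length_eraseIdx, Nat.le_of_lt_succ k.isLt]

theorem reflTransGen_nil_kernel (hloops : ∀ v, G.Adj v v) (pol : Policy G) {μ : V → ℝ}
    (hμ : ∀ v, 0 < μ v) {w : List V} (hw : w ∈ WSpace G) :
    Relation.ReflTransGen (fun a b => 0 < kernel G pol μ a b) [] w := by
  induction w using List.reverseRecOn with
  | nil => exact .refl
  | append_singleton u v ih =>
    obtain ⟨hu, hv⟩ := (append_mem_WSpace_iff hloops).mp hw
    exact (ih hu).tail
      (kernel_pos_of_next_pos pol hμ (by rw [pol.noMatch u hu v hv]; exact one_pos))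

theorem irreducible_kernel (hloops : ∀ v, G.Adj v v) (pol : Policy G) {μ : V → ℝ}
    (hμ : ∀ v, 0 < μ v) : Irreducible G (kernel G pol μ) := fun _ hw _ hw' =>
  (reflTransGen_kernel_nil hloops pol hμ hw).trans (reflTransGen_nil_kernel hloops pol hμ hw')

end Kernel

theorem exists_isStationary_of_finite {P : List V → List V → ℝ} (hfin : (WSpace G).Finite)
    (hP : ∀ w w', 0 ≤ P w w') (hclosed : ∀ w ∈ WSpace G, ∀ w' ∉ WSpace G, P w w' = 0)
    (hrow : ∀ w ∈ WSpace G, ∑' w', P w w' = 1) : ∃ π, IsStationary G P π := by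
  have := hfin.fintype
  have : Nonempty (WSpace G) := ⟨⟨[], nil_mem_WSpace⟩⟩
  have hsum : ∀ f : List V → ℝ, Function.support f ⊆ WSpace G →
      ∑' w, f w = ∑ a : WSpace G, f a := fun f hf =>
    (tsum_subtype_eq_of_support_subset hf).symm.trans (tsum_fintype _)
  let M : Matrix (WSpace G) (WSpace G) ℝ := fun a b => P a b
  have hM : M ∈ Matrix.rowStochastic ℝ _ := Matrix.mem_rowStochastic_iff_sum.mpr
    ⟨fun a b => hP a b, fun a => (hsum _ (Function.support_subset_iff'.mpr
      (hclosed a a.2))).symm.trans (hrow a a.2)⟩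
  obtain ⟨y, ⟨hy0, hy1⟩, hy⟩ := Matrix.exists_mem_stdSimplex_vecMul_eq_self hM
  let π : List V → ℝ := fun w => if h : w ∈ WSpace G then y ⟨w, h⟩ else 0
  have hπ : ∀ w ∉ WSpace G, π w = 0 := fun w hw => dif_neg hw
  refine ⟨π, fun w => ?_, hπ, ?_, fun w' => ?_⟩
  · dsimp only [π]; split_ifs; exacts [hy0 _, le_rfl]
  · rw [hsum π (Function.support_subset_iff'.mpr hπ)]; simpa [π] using hy1
  · by_cases hw' : w' ∈ WSpace G
    · rw [hsum _ ((Function.support_mul_subset_left _ _).trans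
        (Function.support_subset_iff'.mpr hπ))]
      simpa [π, hw', M, Matrix.vecMul, dotProduct] using congrFun hy ⟨w', hw'⟩
    · rw [hπ w' hw']
      refine (tsum_congr fun w => ?_).trans tsum_zero
      by_cases hw : w ∈ WSpace G
      · rw [hclosed w hw w' hw', mul_zero]
      · rw [hπ w hw, zero_mul]

end Multigraph

open Multigraph
theorem all_loops_positive_recurrent_general {V : Type*} [Fintype V] [DecidableEq V]
    (G : Multigraph V) (hcard : 2 ≤ Fintype.card V)
    (hloops : ∀ v : V, G.Adj v v) :
    (∀ (pol : Policy G) (μ : V → ℝ), FullSupport μ →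
      PositiveRecurrent G (kernel G pol μ)) ∧
    (WSpace G).Finite ∧
    ∀ w ∈ WSpace G, ∃ I : Set V, (check G).IsIndep I ∧ w.length ≤ I.ncard := by
  have : Nonempty V := Fintype.card_pos_iff.mp (by omega)
  refine ⟨fun pol μ hμ => ⟨irreducible_kernel hloops pol hμ.1, ?_⟩, finite_WSpace hloops,
    fun w hw => exists_isIndep_check_length_le hloops hw⟩
  exact exists_isStationary_of_finite (finite_WSpace hloops)
    (kernel_nonneg pol fun v => (hμ.1 v).le)
    (fun w hw w' hw' => kernel_eq_zero_of_not_mem hloops pol μ hw hw')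
    (fun w hw => (tsum_kernel pol μ hw).trans hμ.2)

/-- If every node of a connected multigraph `G` (with at least two
nodes) carries a self-loop, then for every admissible matching policy and every fully
supported `μ` the buffer-content Markov chain is positive recurrent; moreover the state
space `𝕎` is finite, every word of `𝕎` having length at most the cardinality of the
largest independent set of the maximal subgraph `Ǧ`. -/
theorem all_loops_positive_recurrent {V : Type*} [Fintype V] [DecidableEq V]
    (G : Multigraph V) (hconn : G.Connected) (hcard : 2 ≤ Fintype.card V)
    (hloops : ∀ v : V, G.Adj v v) :
    (∀ (pol : Policy G) (μ : V → ℝ), FullSupport μ →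
      PositiveRecurrent G (kernel G pol μ)) ∧
    (WSpace G).Finite ∧
    ∀ w ∈ WSpace G, ∃ I : Set V, (check G).IsIndep I ∧ w.length ≤ I.ncard :=
  all_loops_positive_recurrent_general G hcard hloops
end
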